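/- The trace norm is non-increasing under partial trace: for any Hermitian matrix X on a bipartite system A ⊗ B, ‖Tr_B(X)‖₁ ≤ ‖X‖₁. -/

import Mathlib

open Matrix BigOperators Complex
open scoped ComplexOrder

noncomputable section

/-- Frobenius (Hilbert–Schmidt) norm `‖X‖₂ = √(Tr(XᴴX))`. -/
def frobNorm {m : Type*} [Fintype m] (X : Matrix m m ℂ) : ℝ :=
  Real.sqrt ((Xᴴ * X).trace.re)

/-- Trace norm (Schatten 1-norm) `‖X‖₁ = Tr √(XᴴX)`. -/
def traceNorm {m : Type*} [Fintype m] [DecidableEq m] (X : Matrix m m ℂ) : ℝ :=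
  (((Matrix.posSemidef_conjTranspose_mul_self X).isHermitian.eigenvectorUnitary : Matrix m m ℂ) *
    diagonal (((↑) : ℝ → ℂ) ∘ Real.sqrt ∘ (Matrix.posSemidef_conjTranspose_mul_self X).isHermitian.eigenvalues) *
    (star (Matrix.posSemidef_conjTranspose_mul_self X).isHermitian.eigenvectorUnitary : Matrix m m ℂ)).trace.re

/-- Trace distance `|ρ − σ|_tr = ½‖ρ − σ‖₁`. -/
def traceDist {m : Type*} [Fintype m] [DecidableEq m] (ρ σ : Matrix m m ℂ) : ℝ :=
  traceNorm (ρ - σ) / 2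

/-- Purity `Tr(ρ²)` (real part). -/
def purity {m : Type*} [Fintype m] (ρ : Matrix m m ℂ) : ℝ := ((ρ * ρ).trace).re

/-- Outer product `|ψ⟩⟨ψ|`. -/
def outer {m : Type*} (ψ : m → ℂ) : Matrix m m ℂ :=
  Matrix.of fun a b => ψ a * star (ψ b)

/-- Partial trace over the second tensor factor. -/
def ptraceB {A B : Type*} [Fintype B] (M : Matrix (A × B) (A × B) ℂ) : Matrix A A ℂ :=
  Matrix.of fun a a' => ∑ b, M (a, b) (a', b)

/-- Partial trace over the first tensor factor. -/
def ptraceA {A B : Type*} [Fintype A] (M : Matrix (A × B) (A × B) ℂ) : Matrix B B ℂ :=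
  Matrix.of fun b b' => ∑ a, M (a, b) (a, b')

/-- Index type of the `n`-qubit computational basis. -/
abbrev QIdx (n : ℕ) := Fin n → Fin 2

/-- Merge a bit assignment on `s` with one on its complement. -/
def mergeOn {n : ℕ} (s : Finset (Fin n)) (f : {i // i ∈ s} → Fin 2)
    (g : {i // i ∉ s} → Fin 2) : QIdx n :=
  fun i => if h : i ∈ s then f ⟨i, h⟩ else g ⟨i, h⟩

/-- Reduced density matrix on the qubit subset `s` (partial trace over `sᶜ`). -/
def reduce {n : ℕ} (s : Finset (Fin n)) (ρ : Matrix (QIdx n) (QIdx n) ℂ) :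
    Matrix ({i // i ∈ s} → Fin 2) ({i // i ∈ s} → Fin 2) ℂ :=
  Matrix.of fun f f' => ∑ g : {i // i ∉ s} → Fin 2, ρ (mergeOn s f g) (mergeOn s f' g)

/-- Concentratable Entanglement `C(|ψ⟩) = 1 − 2⁻ⁿ Σ_{α⊆[n]} Tr(ρ_α²)`. -/
def CE {n : ℕ} (ψ : QIdx n → ℂ) : ℝ :=
  1 - (1 / 2 ^ n) * ∑ s : Finset (Fin n), purity (reduce s (outer ψ))

end

/-!
For a Hermitian `Y` the sign matrix `S = sign(Y)` satisfies `-1 ≤ S ≤ 1` and `S Y = |Y|`, so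
`‖Y‖₁ = Tr (S Y)`. Conversely `Tr (C X) ≤ ‖X‖₁` for every `-1 ≤ C ≤ 1`, since
`Tr |X| - Tr (C X) = Tr ((1 - C) X⁺) + Tr ((1 + C) X⁻)` is a sum of traces of products of positive
matrices. Taking `Y = Tr_B X` and `C = S ⊗ 1`, whose pairing with `X` is the pairing of `S` with
`Tr_B X`, gives the claim.
-/

open scoped MatrixOrder Kronecker

namespace Matrix

section Kronecker

variable {l m n p α : Type*}

theorem sub_kronecker [NonUnitalNonAssocRing α] (A₁ A₂ : Matrix l m α) (B : Matrix n p α) :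
    (A₁ - A₂) ⊗ₖ B = A₁ ⊗ₖ B - A₂ ⊗ₖ B := by
  ext; simp [sub_mul]

theorem neg_kronecker [NonUnitalNonAssocRing α] (A : Matrix l m α) (B : Matrix n p α) :
    (-A) ⊗ₖ B = -(A ⊗ₖ B) := by
  ext; simp

lemma kronecker_le_kronecker_of_nonneg_right [Fintype m] [Fintype n] {𝕜 : Type*} [RCLike 𝕜]
    {S T : Matrix m m 𝕜} {R : Matrix n n 𝕜} (h : S ≤ T) (hR : 0 ≤ R) : S ⊗ₖ R ≤ T ⊗ₖ R := by
  rw [← sub_nonneg, ← sub_kronecker]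
  exact ((sub_nonneg.mpr h).posSemidef.kronecker hR.posSemidef).nonneg

end Kronecker

variable {n 𝕜 : Type*} [Fintype n] [RCLike 𝕜]

lemma PosSemidef.trace_mul_nonneg {P Q : Matrix n n 𝕜} (hP : P.PosSemidef) (hQ : Q.PosSemidef) :
    0 ≤ (P * Q).trace := by
  classical
  obtain ⟨R, rfl⟩ := CStarAlgebra.nonneg_iff_eq_star_mul_self.mp hQ.nonneg
  rw [← Matrix.mul_assoc, trace_mul_cycle, star_eq_conjTranspose]
  exact (hP.mul_mul_conjTranspose_same R).trace_nonneg

variable [DecidableEq n]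

lemma continuousOn_spectrum (A : Matrix n n 𝕜) (f : ℝ → ℝ) : ContinuousOn f (spectrum ℝ A) := by
  rw [continuousOn_iff_continuous_domRestrict]
  fun_prop

lemma trace_mul_le_trace_abs {C X : Matrix n n 𝕜} (hX : X.IsHermitian) (hC₁ : -1 ≤ C)
    (hC₂ : C ≤ 1) : (C * X).trace ≤ (CFC.abs X).trace := by
  have hX' : IsSelfAdjoint X := hX
  have habs := (CFC.posPart_add_negPart X).symm
  have hpn := (CFC.posPart_sub_negPart X).symm
  have hP := (CFC.posPart_nonneg X).posSemidef
  have hN := (CFC.negPart_nonneg X).posSemidef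
  set P := X⁺
  set N := X⁻
  have key : CFC.abs X - C * X = (1 - C) * P + (1 + C) * N := by
    rw [habs, show C * X = C * (P - N) by rw [hpn]]
    noncomm_ring
  have h₁ : 0 ≤ ((1 - C) * P).trace := (sub_nonneg.mpr hC₂).posSemidef.trace_mul_nonneg hP
  have h₂ : 0 ≤ ((1 + C) * N).trace :=
    (neg_le_iff_add_nonneg'.mp hC₁).posSemidef.trace_mul_nonneg hN
  have := add_nonneg h₁ h₂
  rwa [← trace_add, ← key, trace_sub, sub_nonneg] at this

lemma IsHermitian.exists_mul_eq_abs {A : Matrix n n 𝕜} (hA : A.IsHermitian) :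
    ∃ S : Matrix n n 𝕜, -1 ≤ S ∧ S ≤ 1 ∧ S * A = CFC.abs A := by
  have hA' : IsSelfAdjoint A := hA
  let sign : ℝ → ℝ := fun x => if 0 ≤ x then 1 else -1
  have hsign : ∀ x, -1 ≤ sign x ∧ sign x ≤ 1 := fun x => by
    dsimp [sign]; split_ifs <;> norm_num
  have hcont := continuousOn_spectrum A
  refine ⟨cfc sign A, ?_, cfc_le_one sign A fun x _ => (hsign x).2, ?_⟩
  · simpa using algebraMap_le_cfc sign (-1) A (fun x _ => (hsign x).1) (hcont sign) hA'
  · calc cfc sign A * A = cfc (fun x => sign x * x) A := by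
          rw [cfc_mul sign (fun x => x) A (hcont _) (hcont _), cfc_id' ℝ A]
      _ = cfc (‖·‖) A := cfc_congr fun x _ => by
          dsimp [sign]
          split_ifs with h
          · simp [abs_of_nonneg h]
          · simp [abs_of_neg (not_le.mp h)]
      _ = CFC.abs A := (CFC.abs_eq_cfc_norm A).symm

end Matrix

lemma traceNorm_eq_re_trace_abs {n : Type*} [Fintype n] [DecidableEq n] (X : Matrix n n ℂ) :
    traceNorm X = (CFC.abs X).trace.re := by
  have hXX := posSemidef_conjTranspose_mul_self X
  rw [CFC.abs, star_eq_conjTranspose, CFC.sqrt_eq_real_sqrt _ hXX.nonneg, cfcₙ_eq_cfc,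
    hXX.isHermitian.cfc_eq]
  rfl

section PartialTrace

variable {m n : Type*} [Fintype n]

lemma ptraceB_isHermitian {X : Matrix (m × n) (m × n) ℂ} (hX : X.IsHermitian) :
    (ptraceB X).IsHermitian := by
  ext a a'
  simp only [conjTranspose_apply, ptraceB, of_apply, star_sum]
  exact Finset.sum_congr rfl fun b _ => hX.apply _ _

lemma trace_mul_ptraceB [Fintype m] [DecidableEq n] (S : Matrix m m ℂ)
    (X : Matrix (m × n) (m × n) ℂ) :
    (S * ptraceB X).trace = ((S ⊗ₖ (1 : Matrix n n ℂ)) * X).trace := by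
  simp only [trace, diag_apply, mul_apply, ptraceB, of_apply, Fintype.sum_prod_type,
    kroneckerMap_apply, one_apply, mul_ite, mul_one, mul_zero, ite_mul, zero_mul,
    Finset.sum_ite_eq, Finset.mem_univ, if_true, Finset.mul_sum]
  exact Finset.sum_congr rfl fun a _ => Finset.sum_comm.symm

end PartialTrace

/-- The trace norm is non-increasing under partial trace (for Hermitian matrices). -/
theorem stmt_4 {A B : Type*} [Fintype A] [Fintype B] [DecidableEq A] [DecidableEq B]
    (X : Matrix (A × B) (A × B) ℂ) (hX : X.IsHermitian) :
    traceNorm (ptraceB X) ≤ traceNorm X := by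
  obtain ⟨S, hS₁, hS₂, hSY⟩ := (ptraceB_isHermitian hX).exists_mul_eq_abs
  have hK₁ : -1 ≤ S ⊗ₖ (1 : Matrix B B ℂ) := by
    simpa [neg_kronecker] using
      kronecker_le_kronecker_of_nonneg_right hS₁ (zero_le_one' (Matrix B B ℂ))
  have hK₂ : S ⊗ₖ (1 : Matrix B B ℂ) ≤ 1 := by
    simpa using kronecker_le_kronecker_of_nonneg_right hS₂ (zero_le_one' (Matrix B B ℂ))
  rw [traceNorm_eq_re_trace_abs, traceNorm_eq_re_trace_abs, ← hSY, trace_mul_ptraceB]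
  exact Complex.re_le_re (trace_mul_le_trace_abs hX hK₁ hK₂)
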